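/- arXiv:1201.5968 — 2 statements merged into one kernel-verified Lean document; each statement's English description precedes it below -/
import Mathlib

section
/- Let U be a finite nonempty set, f : U → ℝ with f(x) > 0, ρ : U → ℝ nonnegative and not identically zero. Let a > 0 be the unique solution of Σ_{x∈U} (1/f(x)) ρ(x)(a − ρ(x))⁺ = 1, and set w_ρ(x) = ((a − ρ(x))⁺/f(x)) / Σ_{y∈U} ((a − ρ(y))⁺/f(y)). Then w_ρ minimizes g_ρ(w) = (Σ_x w(x)ρ(x))² + Σ_x w(x)² f(x) over all w with w(x) ≥ 0 and Σ_x w(x) = 1, and it is the unique minimizer. -/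
/-!
At `w = w_ρ` half the gradient of `g_ρ` is `x ↦ (∑ w ρ) ρ x + w x f x = max a (ρ x) / T`, where
`T = ∑ (a - ρ)⁺ / f`; it is bounded below by `a / T` with equality wherever `w x > 0`. These are
the Karush–Kuhn–Tucker conditions on the simplex, and since `g_ρ` is quadratic they give the exact
bound `g_ρ w + ∑ (v - w)² f ≤ g_ρ v`, which is both minimality and uniqueness.
-/

open Finset

section

variable {U : Type*} [Fintype U]

theorem sum_sub_mul_nonneg_of_complementary_slackness {v w G : U → ℝ} {c : ℝ}
    (hv : ∀ x, 0 ≤ v x) (hsum : ∑ x, v x = ∑ x, w x) (hG : ∀ x, c ≤ G x)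
    (hslack : ∀ x, w x * (G x - c) = 0) :
    0 ≤ ∑ x, (v x - w x) * G x := by
  have hshift : ∑ x, (v x - w x) * G x = ∑ x, v x * (G x - c) := by
    have : ∑ x, (v x - w x) * G x
        = ∑ x, v x * (G x - c) - ∑ x, w x * (G x - c) + c * (∑ x, v x - ∑ x, w x) := by
      rw [← sum_sub_distrib, ← sum_sub_distrib, mul_sum, ← sum_add_distrib]
      exact sum_congr rfl fun x _ => by ring
    rw [this, hsum]
    simp [hslack]
  rw [hshift]
  exact sum_nonneg fun x _ => mul_nonneg (hv x) (sub_nonneg.mpr (hG x))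

theorem eq_of_sum_sq_sub_mul_nonpos {f v w : U → ℝ} (hf : ∀ x, 0 < f x)
    (h : ∑ x, (v x - w x) ^ 2 * f x ≤ 0) : v = w := by
  have hterm : ∀ x ∈ univ, 0 ≤ (v x - w x) ^ 2 * f x := fun x _ =>
    mul_nonneg (sq_nonneg _) (hf x).le
  have hzero := (sum_eq_zero_iff_of_nonneg hterm).mp (le_antisymm h (sum_nonneg hterm))
  funext x
  have := hzero x (mem_univ x)
  rw [mul_eq_zero, or_iff_left (hf x).ne', sq_eq_zero_iff, sub_eq_zero] at this
  exact this

section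

variable (f ρ : U → ℝ)

-- the paper's `g_ρ`
def mseBound (v : U → ℝ) : ℝ :=
  (∑ x, v x * ρ x) ^ 2 + ∑ x, v x ^ 2 * f x

def mseBoundHalfGrad (w : U → ℝ) (x : U) : ℝ :=
  (∑ y, w y * ρ y) * ρ x + w x * f x

theorem mseBound_eq_add (v w : U → ℝ) :
    mseBound f ρ v = mseBound f ρ w + 2 * ∑ x, (v x - w x) * mseBoundHalfGrad f ρ w x
      + (∑ x, (v x - w x) * ρ x) ^ 2 + ∑ x, (v x - w x) ^ 2 * f x := by
  have hlin : ∑ x, v x * ρ x = ∑ x, w x * ρ x + ∑ x, (v x - w x) * ρ x := by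
    rw [← sum_add_distrib]
    exact sum_congr rfl fun x _ => by ring
  have hgrad : ∑ x, (v x - w x) * mseBoundHalfGrad f ρ w x
      = (∑ x, w x * ρ x) * ∑ x, (v x - w x) * ρ x + ∑ x, (v x - w x) * (w x * f x) := by
    rw [mul_sum, ← sum_add_distrib]
    exact sum_congr rfl fun x _ => by simp only [mseBoundHalfGrad]; ring
  have hquad : ∑ x, v x ^ 2 * f x = ∑ x, w x ^ 2 * f x
      + 2 * ∑ x, (v x - w x) * (w x * f x) + ∑ x, (v x - w x) ^ 2 * f x := by
    rw [mul_sum, ← sum_add_distrib, ← sum_add_distrib]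
    exact sum_congr rfl fun x _ => by ring
  simp only [mseBound]
  rw [hlin, hgrad, hquad]
  ring

theorem mseBound_add_le_of_complementary_slackness {v w : U → ℝ} {c : ℝ}
    (hv : ∀ x, 0 ≤ v x) (hsum : ∑ x, v x = ∑ x, w x)
    (hG : ∀ x, c ≤ mseBoundHalfGrad f ρ w x)
    (hslack : ∀ x, w x * (mseBoundHalfGrad f ρ w x - c) = 0) :
    mseBound f ρ w + ∑ x, (v x - w x) ^ 2 * f x ≤ mseBound f ρ v := by
  rw [mseBound_eq_add f ρ v w]
  nlinarith [sum_sub_mul_nonneg_of_complementary_slackness hv hsum hG hslack,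
    sq_nonneg (∑ x, (v x - w x) * ρ x)]

end

section

variable {f ρ : U → ℝ} {a : ℝ}

-- the paper's `w_ρ`
noncomputable def waterFillingWeight (f ρ : U → ℝ) (a : ℝ) (x : U) : ℝ :=
  max (a - ρ x) 0 / f x / ∑ y, max (a - ρ y) 0 / f y

theorem sum_posPart_div_pos (hf : ∀ x, 0 ≤ f x)
    (ha : ∑ x, 1 / f x * ρ x * max (a - ρ x) 0 = 1) :
    0 < ∑ x, max (a - ρ x) 0 / f x := by
  refine (sum_nonneg fun x _ => div_nonneg (le_max_right _ _) (hf x)).lt_of_ne' fun hT => ?_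
  have hterm := (sum_eq_zero_iff_of_nonneg fun x _ =>
    div_nonneg (le_max_right _ _) (hf x)).mp hT
  have : ∑ x, 1 / f x * ρ x * max (a - ρ x) 0 = 0 := sum_eq_zero fun x hx => by
    rw [show 1 / f x * ρ x * max (a - ρ x) 0 = ρ x * (max (a - ρ x) 0 / f x) by ring,
      hterm x hx, mul_zero]
  linarith

theorem waterFillingWeight_nonneg (hf : ∀ x, 0 ≤ f x) (x : U) :
    0 ≤ waterFillingWeight f ρ a x :=
  div_nonneg (div_nonneg (le_max_right _ _) (hf x))
    (sum_nonneg fun y _ => div_nonneg (le_max_right _ _) (hf y))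

theorem sum_waterFillingWeight (hf : ∀ x, 0 ≤ f x)
    (ha : ∑ x, 1 / f x * ρ x * max (a - ρ x) 0 = 1) :
    ∑ x, waterFillingWeight f ρ a x = 1 := by
  simp only [waterFillingWeight]
  rw [← sum_div, div_self (sum_posPart_div_pos hf ha).ne']

theorem mseBoundHalfGrad_waterFillingWeight (hf : ∀ x, f x ≠ 0)
    (ha : ∑ x, 1 / f x * ρ x * max (a - ρ x) 0 = 1) (x : U) :
    mseBoundHalfGrad f ρ (waterFillingWeight f ρ a) x
      = max a (ρ x) / ∑ y, max (a - ρ y) 0 / f y := by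
  have hmean : ∑ y, waterFillingWeight f ρ a y * ρ y = 1 / ∑ y, max (a - ρ y) 0 / f y := by
    rw [← ha, sum_div]
    exact sum_congr rfl fun y _ => by simp only [waterFillingWeight]; ring
  have hmax : ρ x + max (a - ρ x) 0 = max a (ρ x) := by
    rw [← max_add_add_left, add_sub_cancel, add_zero, max_comm]
  rw [mseBoundHalfGrad, hmean, waterFillingWeight, ← hmax]
  field_simp [hf x]

theorem mseBound_waterFillingWeight_add_le (hf : ∀ x, 0 < f x)
    (ha : ∑ x, 1 / f x * ρ x * max (a - ρ x) 0 = 1) {v : U → ℝ}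
    (hv : ∀ x, 0 ≤ v x) (hsum : ∑ x, v x = 1) :
    mseBound f ρ (waterFillingWeight f ρ a) + ∑ x, (v x - waterFillingWeight f ρ a x) ^ 2 * f x
      ≤ mseBound f ρ v := by
  have hf₀ : ∀ x, 0 ≤ f x := fun x => (hf x).le
  have hT := sum_posPart_div_pos hf₀ ha
  have hgrad := mseBoundHalfGrad_waterFillingWeight (fun x => (hf x).ne') ha
  refine mseBound_add_le_of_complementary_slackness f ρ hv
    (by rw [hsum, sum_waterFillingWeight hf₀ ha]) (c := a / ∑ y, max (a - ρ y) 0 / f y)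
    (fun x => ?_) (fun x => ?_)
  · rw [hgrad]
    exact div_le_div_of_nonneg_right (le_max_left _ _) hT.le
  · rcases le_total (ρ x) a with h | h
    · rw [hgrad, max_eq_left h, sub_self, mul_zero]
    · rw [waterFillingWeight, max_eq_right (sub_nonpos.mpr h), zero_div, zero_div, zero_mul]

end

end

theorem stmt_3_general {U : Type*} [Fintype U]
    (f ρ : U → ℝ) (hf : ∀ x, 0 < f x)
    (a : ℝ)
    (haeq : ∑ x : U, (1 / f x) * ρ x * max (a - ρ x) 0 = 1)
    (w : U → ℝ)
    (hw : w = fun x =>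
      (max (a - ρ x) 0 / f x) / ∑ y : U, max (a - ρ y) 0 / f y)
    (g : (U → ℝ) → ℝ)
    (hg : g = fun v => (∑ x : U, v x * ρ x) ^ 2 + ∑ x : U, (v x) ^ 2 * f x) :
    (∀ v : U → ℝ, (∀ x, 0 ≤ v x) → ∑ x : U, v x = 1 → g w ≤ g v) ∧
      (∀ v : U → ℝ, (∀ x, 0 ≤ v x) → ∑ x : U, v x = 1 →
        (∀ u : U → ℝ, (∀ x, 0 ≤ u x) → ∑ x : U, u x = 1 → g v ≤ g u) → v = w) := by
  obtain rfl : w = waterFillingWeight f ρ a := hw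
  obtain rfl : g = mseBound f ρ := hg
  have hdist_nonneg (v : U → ℝ) : 0 ≤ ∑ x, (v x - waterFillingWeight f ρ a x) ^ 2 * f x :=
    sum_nonneg fun x _ => mul_nonneg (sq_nonneg _) (hf x).le
  refine ⟨fun v hv hsum => ?_, fun v hv hsum hmin => ?_⟩
  · linarith [mseBound_waterFillingWeight_add_le hf haeq hv hsum, hdist_nonneg v]
  · have hw_min := hmin _ (waterFillingWeight_nonneg fun x => (hf x).le)
      (sum_waterFillingWeight (fun x => (hf x).le) haeq)
    refine eq_of_sum_sq_sub_mul_nonpos hf ?_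
    linarith [mseBound_waterFillingWeight_add_le hf haeq hv hsum]

theorem stmt_3 {U : Type*} [Fintype U] [Nonempty U]
    (f ρ : U → ℝ) (hf : ∀ x, 0 < f x) (hρ : ∀ x, 0 ≤ ρ x)
    (hρne : ∃ x, ρ x ≠ 0)
    (a : ℝ) (ha : 0 < a)
    (haeq : ∑ x : U, (1 / f x) * ρ x * max (a - ρ x) 0 = 1)
    (w : U → ℝ)
    (hw : w = fun x =>
      (max (a - ρ x) 0 / f x) / ∑ y : U, max (a - ρ y) 0 / f y)
    (g : (U → ℝ) → ℝ)
    (hg : g = fun v => (∑ x : U, v x * ρ x) ^ 2 + ∑ x : U, (v x) ^ 2 * f x) :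
    (∀ v : U → ℝ, (∀ x, 0 ≤ v x) → ∑ x : U, v x = 1 → g w ≤ g v) ∧
      (∀ v : U → ℝ, (∀ x, 0 ≤ v x) → ∑ x : U, v x = 1 →
        (∀ u : U → ℝ, (∀ x, 0 ≤ u x) → ∑ x : U, u x = 1 → g v ≤ g u) → v = w) :=
  stmt_3_general f ρ hf a haeq w hw g hg
end

section
/- Let U be a finite set, f : U → ℝ with f(x) > 0, and let 0 = ρ₁ ≤ ρ₂ ≤ ⋯ ≤ ρ_M be the values of a nonnegative function ρ on U sorted in ascending order with corresponding intensities f₁,…,f_M. Define a_k = (1 + Σ_{i=1}^k ρ_i²/f_i) / (Σ_{i=1}^k ρ_i/f_i) for 1 ≤ k ≤ M (with a_k = ∞ if the denominator is 0), and let k* = max{1 ≤ k ≤ M : a_k ≥ ρ_k}. Then a = a_{k*} is the unique solution of Σ_{i=1}^M (1/f_i) ρ_i (a − ρ_i)⁺ = 1; moreover k* is the unique index k with a_k ≥ ρ_k and (if k < M) a_{k+1} < ρ_{k+1}. -/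
/-!
With `c i = ρ i / f i ≥ 0`, the map `H t = ∑ c i (t - ρ i)⁺` is nondecreasing and strictly
increasing wherever it is positive, so `H a = 1` has at most one solution. On `[ρ k, ρ (k+1)]`
it is the affine function `t ↦ t S₁(k) - S₂(k)`, with `S₁(k) = ∑_{i ≤ k} ρ i / f i` and
`S₂(k) = ∑_{i ≤ k} ρ i ^ 2 / f i`, whose value `1` is attained at `a_k`; hence
`a_k ≥ ρ k` says exactly `H (ρ k) ≤ 1`. This condition is therefore downward closed in `k`,
and for the largest `k` satisfying it, `a_k` lies in `[ρ k, ρ (k+1))` and solves `H a_k = 1`.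
-/

open Finset

section HingeSum

variable {ι : Type*} (s : Finset ι) (c ρ : ι → ℝ)

def hingeSum (t : ℝ) : ℝ := ∑ i ∈ s, c i * max (t - ρ i) 0

variable {s c ρ}

theorem hingeSum_mono (hc : ∀ i ∈ s, 0 ≤ c i) : Monotone (hingeSum s c ρ) := fun _ _ hxy =>
  sum_le_sum fun i hi => mul_le_mul_of_nonneg_left (max_le_max (by linarith) le_rfl) (hc i hi)

theorem exists_pos_lt_of_hingeSum_pos {t : ℝ} (h : 0 < hingeSum s c ρ t) :
    ∃ i ∈ s, 0 < c i ∧ ρ i < t := by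
  obtain ⟨i, hi, hpos⟩ := exists_lt_of_sum_lt (f := fun _ => 0)
    (g := fun i => c i * max (t - ρ i) 0) (by rwa [sum_const_zero])
  rcases pos_and_pos_or_neg_and_neg_of_mul_pos hpos with ⟨hc, hmax⟩ | ⟨_, hmax⟩
  · exact ⟨i, hi, hc, sub_pos.1 ((lt_max_iff.1 hmax).resolve_right (lt_irrefl 0))⟩
  · exact absurd hmax (le_max_right _ _).not_gt

theorem hingeSum_lt_hingeSum (hc : ∀ i ∈ s, 0 ≤ c i) {x y : ℝ} (hxy : x < y)
    (hy : 0 < hingeSum s c ρ y) : hingeSum s c ρ x < hingeSum s c ρ y := by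
  obtain ⟨j, hj, hcj, hρj⟩ := exists_pos_lt_of_hingeSum_pos hy
  refine sum_lt_sum (fun i hi => ?_) ⟨j, hj, ?_⟩
  · exact mul_le_mul_of_nonneg_left (max_le_max (by linarith) le_rfl) (hc i hi)
  · exact mul_lt_mul_of_pos_left
      (max_lt (lt_max_of_lt_left (by linarith)) (lt_max_of_lt_left (by linarith))) hcj

theorem hingeSum_injOn (hc : ∀ i ∈ s, 0 ≤ c i) :
    Set.InjOn (hingeSum s c ρ) {t | 0 < hingeSum s c ρ t} := by
  intro x hx y _ h
  rcases lt_trichotomy x y with hxy | rfl | hxy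
  · exact absurd h (hingeSum_lt_hingeSum hc hxy (h ▸ hx)).ne
  · rfl
  · exact absurd h (hingeSum_lt_hingeSum hc hxy hx).ne'

theorem hingeSum_eq_of_le {t : ℝ} (ht : ∀ i ∈ s, ρ i ≤ t) :
    hingeSum s c ρ t = t * ∑ i ∈ s, c i - ∑ i ∈ s, c i * ρ i := by
  rw [mul_sum, ← sum_sub_distrib]
  refine sum_congr rfl fun i hi => ?_
  rw [max_eq_left (sub_nonneg.2 (ht i hi))]
  ring

theorem hingeSum_subset {u : Finset ι} {t : ℝ} (hsu : s ⊆ u) (ht : ∀ i ∈ u, i ∉ s → t ≤ ρ i) :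
    hingeSum s c ρ t = hingeSum u c ρ t :=
  sum_subset hsu fun i hi his => by rw [max_eq_right (sub_nonpos.2 (ht i hi his)), mul_zero]

end HingeSum

section Sorted

variable {M : ℕ} {ρ f : ℕ → ℝ}

theorem hingeSum_Icc_eq_of_le_of_le (hρ : MonotoneOn ρ (Set.Icc 1 M)) {k : ℕ} {t : ℝ}
    (hkM : k ≤ M) (hk : ρ k ≤ t) (hk' : k < M → t ≤ ρ (k + 1)) :
    hingeSum (Icc 1 M) (fun i => 1 / f i * ρ i) ρ t =
      t * ∑ i ∈ Icc 1 k, ρ i / f i - ∑ i ∈ Icc 1 k, ρ i ^ 2 / f i := by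
  rw [← hingeSum_subset (Icc_subset_Icc_right hkM), hingeSum_eq_of_le]
  · simp only [div_mul_eq_mul_div, one_mul, ← pow_two]
  · intro i hi
    simp only [mem_Icc] at hi
    exact (hρ ⟨hi.1, hi.2.trans hkM⟩ ⟨hi.1.trans hi.2, hkM⟩ hi.2).trans hk
  · intro i hi hik
    simp only [mem_Icc, not_and, not_le] at hi hik
    exact (hk' (by omega)).trans (hρ ⟨by omega, by omega⟩ ⟨hi.1, hi.2⟩ (hik hi.1))

theorem pos_of_hingeSum_succ_pos (hρ : MonotoneOn ρ (Set.Icc 1 M)) (hρ0 : ∀ i ∈ Icc 1 M, 0 ≤ ρ i)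
    {k : ℕ} (hk : k < M) (h : 0 < hingeSum (Icc 1 M) (fun i => 1 / f i * ρ i) ρ (ρ (k + 1))) :
    0 < ρ k := by
  obtain ⟨i, hi, hci, hlt⟩ := exists_pos_lt_of_hingeSum_pos h
  have hρi : 0 < ρ i := (hρ0 i hi).lt_of_ne fun h0 => by simp [← h0] at hci
  rw [mem_Icc] at hi
  have hik : i < k + 1 := hρ.reflect_lt hi ⟨by omega, hk⟩ hlt
  exact hρi.trans_le (hρ hi ⟨by omega, hk.le⟩ (by omega))

end Sorted

/-- Division by zero makes this `0` where the paper has `a_k = ∞`, i.e. when `ρ` vanishes on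
`[1, k]`. -/
noncomputable def bandwidthCandidate (ρ f : ℕ → ℝ) (k : ℕ) : ℝ :=
  (1 + ∑ i ∈ Icc 1 k, ρ i ^ 2 / f i) / (∑ i ∈ Icc 1 k, ρ i / f i)

section Candidate

variable {M k : ℕ} {ρ f : ℕ → ℝ}

theorem bandwidthCandidate_mul_sub (h : ∑ i ∈ Icc 1 k, ρ i / f i ≠ 0) :
    bandwidthCandidate ρ f k * ∑ i ∈ Icc 1 k, ρ i / f i - ∑ i ∈ Icc 1 k, ρ i ^ 2 / f i = 1 := by
  rw [bandwidthCandidate, div_mul_cancel₀ _ h]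
  ring

theorem le_bandwidthCandidate_iff (h : 0 < ∑ i ∈ Icc 1 k, ρ i / f i) {t : ℝ} :
    t ≤ bandwidthCandidate ρ f k ↔
      t * ∑ i ∈ Icc 1 k, ρ i / f i - ∑ i ∈ Icc 1 k, ρ i ^ 2 / f i ≤ 1 := by
  rw [bandwidthCandidate, le_div_iff₀ h, sub_le_iff_le_add]

theorem sum_Icc_div_pos (hf : ∀ i ∈ Icc 1 M, 0 < f i) (hρ0 : ∀ i ∈ Icc 1 M, 0 ≤ ρ i)
    (hk : k ∈ Icc 1 M) (hρk : 0 < ρ k) : 0 < ∑ i ∈ Icc 1 k, ρ i / f i := by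
  rw [mem_Icc] at hk
  have hsub : Icc 1 k ⊆ Icc 1 M := Icc_subset_Icc_right hk.2
  exact sum_pos' (fun i hi => div_nonneg (hρ0 i (hsub hi)) (hf i (hsub hi)).le)
    ⟨k, mem_Icc.2 ⟨hk.1, le_rfl⟩, div_pos hρk (hf k (mem_Icc.2 hk))⟩

theorem eq_zero_or_le_bandwidthCandidate_iff (hf : ∀ i ∈ Icc 1 M, 0 < f i)
    (hρ0 : ∀ i ∈ Icc 1 M, 0 ≤ ρ i) (hρ : MonotoneOn ρ (Set.Icc 1 M)) (hk : k ∈ Icc 1 M) :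
    (ρ k = 0 ∨ bandwidthCandidate ρ f k ≥ ρ k) ↔
      hingeSum (Icc 1 M) (fun i => 1 / f i * ρ i) ρ (ρ k) ≤ 1 := by
  have hk' := mem_Icc.1 hk
  rw [hingeSum_Icc_eq_of_le_of_le hρ hk'.2 le_rfl fun h =>
    hρ hk' ⟨by omega, h⟩ (Nat.le_succ k)]
  rcases (hρ0 k hk).eq_or_lt with h0 | hpos
  · refine iff_of_true (Or.inl h0.symm) ?_
    have : 0 ≤ ∑ i ∈ Icc 1 k, ρ i ^ 2 / f i :=
      sum_nonneg fun i hi => div_nonneg (sq_nonneg _) (hf i (Icc_subset_Icc_right hk'.2 hi)).le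
    rw [← h0, zero_mul]
    linarith
  · rw [ge_iff_le, le_bandwidthCandidate_iff (sum_Icc_div_pos hf hρ0 hk hpos)]
    exact or_iff_right hpos.ne'

theorem hingeSum_bandwidthCandidate (hf : ∀ i ∈ Icc 1 M, 0 < f i)
    (hρ0 : ∀ i ∈ Icc 1 M, 0 ≤ ρ i) (hρ : MonotoneOn ρ (Set.Icc 1 M)) (hk : k ∈ Icc 1 M)
    (hρk : 0 < ρ k) (hle : ρ k ≤ bandwidthCandidate ρ f k)
    (hnext : k < M → 1 < hingeSum (Icc 1 M) (fun i => 1 / f i * ρ i) ρ (ρ (k + 1))) :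
    hingeSum (Icc 1 M) (fun i => 1 / f i * ρ i) ρ (bandwidthCandidate ρ f k) = 1 := by
  have hk' := mem_Icc.1 hk
  have hS := sum_Icc_div_pos hf hρ0 hk hρk
  have hlt : k < M → bandwidthCandidate ρ f k < ρ (k + 1) := fun h => by
    rw [← not_le, le_bandwidthCandidate_iff hS, not_le,
      ← hingeSum_Icc_eq_of_le_of_le hρ hk'.2 (hρ hk' ⟨by omega, h⟩ (by omega)) fun _ => le_rfl]
    exact hnext h
  rw [hingeSum_Icc_eq_of_le_of_le hρ hk'.2 hle fun h => (hlt h).le]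
  exact bandwidthCandidate_mul_sub hS.ne'

end Candidate

theorem and_imp_not_succ_iff_eq {P : ℕ → Prop} {M n k : ℕ} (hP : ∀ j, 1 ≤ j → j ≤ n → P j)
    (hn : n ≤ M) (hmax : ∀ j, 1 ≤ j → j ≤ M → P j → j ≤ n) (hk1 : 1 ≤ k) (hkM : k ≤ M) :
    (P k ∧ (k < M → ¬ P (k + 1))) ↔ k = n := by
  constructor
  · rintro ⟨hk, hnext⟩
    by_contra hne
    have hlt : k < n := (hmax k hk1 hkM hk).lt_of_ne hne
    exact hnext (by omega) (hP (k + 1) (by omega) hlt)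
  · rintro rfl
    exact ⟨hP k hk1 le_rfl, fun _ h => by have := hmax (k + 1) (by omega) (by omega) h; omega⟩

theorem stmt_5_general (M : ℕ) (ρ f : ℕ → ℝ)
    (hf : ∀ i, 1 ≤ i → i ≤ M → 0 < f i)
    (hρ0 : ∀ i, 1 ≤ i → i ≤ M → 0 ≤ ρ i)
    (hsorted : ∀ i j, 1 ≤ i → i ≤ j → j ≤ M → ρ i ≤ ρ j)
    (hρne : ∃ i, 1 ≤ i ∧ i ≤ M ∧ ρ i ≠ 0)
    (ak : ℕ → ℝ)
    (hak : ak = fun k =>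
      (1 + ∑ i ∈ Finset.Icc 1 k, ρ i ^ 2 / f i) / (∑ i ∈ Finset.Icc 1 k, ρ i / f i))
    (cond : ℕ → Prop)
    (hcond : cond = fun k => ρ k = 0 ∨ ak k ≥ ρ k)
    (kstar : ℕ) (hks1 : 1 ≤ kstar) (hksM : kstar ≤ M) (hkscond : cond kstar)
    (hksmax : ∀ k, 1 ≤ k → k ≤ M → cond k → k ≤ kstar) :
    (0 < ak kstar ∧
      ∑ i ∈ Finset.Icc 1 M, (1 / f i) * ρ i * max (ak kstar - ρ i) 0 = 1) ∧
    (∀ a : ℝ, 0 < a →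
      ∑ i ∈ Finset.Icc 1 M, (1 / f i) * ρ i * max (a - ρ i) 0 = 1 → a = ak kstar) ∧
    (∀ k, 1 ≤ k → k ≤ M →
      ((cond k ∧ (k < M → ¬ cond (k + 1))) ↔ k = kstar)) := by
  obtain rfl : ak = bandwidthCandidate ρ f := hak
  have hf' : ∀ i ∈ Icc 1 M, 0 < f i := fun i hi => hf i (mem_Icc.1 hi).1 (mem_Icc.1 hi).2
  have hρ0' : ∀ i ∈ Icc 1 M, 0 ≤ ρ i := fun i hi => hρ0 i (mem_Icc.1 hi).1 (mem_Icc.1 hi).2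
  have hρ : MonotoneOn ρ (Set.Icc 1 M) := fun i hi j hj hij => hsorted i j hi.1 hij hj.2
  have hc : ∀ i ∈ Icc 1 M, 0 ≤ 1 / f i * ρ i := fun i hi =>
    mul_nonneg (one_div_nonneg.2 (hf' i hi).le) (hρ0' i hi)
  let H := hingeSum (Icc 1 M) (fun i => 1 / f i * ρ i) ρ
  have hcondH : ∀ k ∈ Icc 1 M, cond k ↔ H (ρ k) ≤ 1 := fun k hk => by
    subst hcond
    exact eq_zero_or_le_bandwidthCandidate_iff hf' hρ0' hρ hk
  have hcond_le : ∀ j, 1 ≤ j → j ≤ kstar → cond j := fun j hj hjk =>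
    (hcondH j (mem_Icc.2 ⟨hj, hjk.trans hksM⟩)).2 <|
      (hingeSum_mono hc (hρ ⟨hj, hjk.trans hksM⟩ ⟨hj.trans hjk, hksM⟩ hjk)).trans
        ((hcondH kstar (mem_Icc.2 ⟨hks1, hksM⟩)).1 hkscond)
  have hnext : kstar < M → 1 < H (ρ (kstar + 1)) := fun h => by
    by_contra! h'
    have := hksmax _ (by omega) h ((hcondH _ (mem_Icc.2 ⟨by omega, h⟩)).2 h')
    omega
  have hρks : 0 < ρ kstar := by
    rcases hksM.lt_or_eq with h | rfl
    · exact pos_of_hingeSum_succ_pos hρ hρ0' h (one_pos.trans (hnext h))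
    · obtain ⟨i, hi1, hiM, hi⟩ := hρne
      exact ((hρ0 i hi1 hiM).lt_of_ne' hi).trans_le (hsorted i _ hi1 hiM le_rfl)
  have hρle : ρ kstar ≤ bandwidthCandidate ρ f kstar := by
    subst hcond
    exact hkscond.resolve_left hρks.ne'
  have hH : H (bandwidthCandidate ρ f kstar) = 1 :=
    hingeSum_bandwidthCandidate hf' hρ0' hρ (mem_Icc.2 ⟨hks1, hksM⟩) hρks hρle hnext
  refine ⟨⟨hρks.trans_le hρle, hH⟩, fun a _ ha => ?_, fun k hk1 hkM =>
    and_imp_not_succ_iff_eq hcond_le hksM hksmax hk1 hkM⟩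
  have ha' : H a = 1 := ha
  exact hingeSum_injOn hc (zero_lt_one.trans_eq ha'.symm) (zero_lt_one.trans_eq hH.symm)
    (ha'.trans hH.symm)

/-- Remark 1 (calculate a): explicit computation of the bandwidth. The values
`ρ 1 ≤ ⋯ ≤ ρ M` are sorted in ascending order with `ρ 1 = 0`, and the
convention `a_k = ∞` when `ρ_k = 0` is encoded by the disjunct `ρ k = 0` in
the condition `cond k`. -/
theorem stmt_5 (M : ℕ) (hM : 1 ≤ M) (ρ f : ℕ → ℝ)
    (hf : ∀ i, 1 ≤ i → i ≤ M → 0 < f i)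
    (hρ0 : ∀ i, 1 ≤ i → i ≤ M → 0 ≤ ρ i)
    (hρ1 : ρ 1 = 0)
    (hsorted : ∀ i j, 1 ≤ i → i ≤ j → j ≤ M → ρ i ≤ ρ j)
    (hρne : ∃ i, 1 ≤ i ∧ i ≤ M ∧ ρ i ≠ 0)
    (ak : ℕ → ℝ)
    (hak : ak = fun k =>
      (1 + ∑ i ∈ Finset.Icc 1 k, ρ i ^ 2 / f i) / (∑ i ∈ Finset.Icc 1 k, ρ i / f i))
    (cond : ℕ → Prop)
    (hcond : cond = fun k => ρ k = 0 ∨ ak k ≥ ρ k)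
    (kstar : ℕ) (hks1 : 1 ≤ kstar) (hksM : kstar ≤ M) (hkscond : cond kstar)
    (hksmax : ∀ k, 1 ≤ k → k ≤ M → cond k → k ≤ kstar) :
    (0 < ak kstar ∧
      ∑ i ∈ Finset.Icc 1 M, (1 / f i) * ρ i * max (ak kstar - ρ i) 0 = 1) ∧
    (∀ a : ℝ, 0 < a →
      ∑ i ∈ Finset.Icc 1 M, (1 / f i) * ρ i * max (a - ρ i) 0 = 1 → a = ak kstar) ∧
    (∀ k, 1 ≤ k → k ≤ M →
      ((cond k ∧ (k < M → ¬ cond (k + 1))) ↔ k = kstar)) :=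
  stmt_5_general M ρ f hf hρ0 hsorted hρne ak hak cond hcond kstar hks1 hksM hkscond hksmax
end
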